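/- For any fixed real number r0 > 0 there exists a natural number M2 (depending on r0) such that for every integer m ≥ M2 one has J_m(r0) / √(∫_0^{r0} J_m(r)² · r dr) ≥ (1/2) · √(2m+2) · r0^{−1}, where J_m is the Bessel function of the first kind of integer order m defined by its power series. -/

import Mathlib

open Real

/-- Bessel function of the first kind, defined by its power series. -/
noncomputable def besselJ (α : ℝ) (x : ℝ) : ℝ :=
  ∑' k : ℕ,
    ((-1 : ℝ) ^ k / ((Nat.factorial k : ℝ) * Real.Gamma ((k : ℝ) + α + 1))) *
      (x / 2) ^ (2 * (k : ℝ) + α)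

/-!
For `x² ≤ 2m + 2` the terms `(x/2)^(2k+m) / (k! (k+m)!)` of the series of `J_m(x)` decrease,
and the second is at most half the first, so the alternating series bounds give
`t(x)/2 ≤ J_m(x) ≤ t(x)` for the leading term `t(x) = (x/2)^m / m!`. Hence, once `r0² ≤ 2m + 2`,
`∫_0^{r0} J_m(r)² r dr ≤ ∫_0^{r0} t(r)² r dr = t(r0)² r0² / (2m + 2)`, while `J_m(r0) ≥ t(r0)/2`.
-/

open MeasureTheory Set Finset
open scoped Nat

noncomputable def besselTerm (m : ℕ) (x : ℝ) (k : ℕ) : ℝ :=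
  (x / 2) ^ (2 * k + m) / (k ! * (k + m)! : ℝ)

theorem besselJ_natCast (m : ℕ) (x : ℝ) :
    besselJ m x = ∑' k, (-1) ^ k * besselTerm m x k := by
  refine tsum_congr fun k => ?_
  rw [show (k : ℝ) + m + 1 = ((k + m : ℕ) : ℝ) + 1 by push_cast; ring, Gamma_nat_eq_factorial,
    show 2 * (k : ℝ) + m = ((2 * k + m : ℕ) : ℝ) by push_cast; ring, rpow_natCast, besselTerm]
  ring

theorem besselTerm_zero (m : ℕ) (x : ℝ) : besselTerm m x 0 = (x / 2) ^ m / m ! := by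
  simp [besselTerm]

theorem besselTerm_succ (m : ℕ) (x : ℝ) (k : ℕ) :
    besselTerm m x (k + 1) = besselTerm m x k * ((x / 2) ^ 2 / ((k + 1) * (k + m + 1))) := by
  rw [besselTerm, besselTerm, show 2 * (k + 1) + m = 2 * k + m + 2 by ring,
    show k + 1 + m = k + m + 1 by ring, pow_add, Nat.factorial_succ, Nat.factorial_succ]
  push_cast
  field_simp

theorem besselTerm_nonneg (m : ℕ) {x : ℝ} (hx : 0 ≤ x) (k : ℕ) : 0 ≤ besselTerm m x k := by
  unfold besselTerm
  positivity

theorem besselTerm_zero_pos (m : ℕ) {x : ℝ} (hx : 0 < x) : 0 < besselTerm m x 0 := by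
  rw [besselTerm_zero]
  positivity

theorem norm_besselTerm_le (m : ℕ) (x : ℝ) (k : ℕ) :
    ‖(-1) ^ k * besselTerm m x k‖ ≤ |x / 2| ^ m * ((|x / 2| ^ 2) ^ k / k !) := by
  have hfact : (1 : ℝ) ≤ (k + m)! := by exact_mod_cast Nat.factorial_pos _
  rw [norm_mul, norm_pow, norm_neg, norm_one, one_pow, one_mul, Real.norm_eq_abs, besselTerm,
    abs_div, abs_pow, abs_of_pos (by positivity : (0 : ℝ) < k ! * (k + m)!), ← pow_mul,
    mul_div_assoc', ← pow_add, add_comm m, mul_comm 2 k]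
  gcongr
  exact le_mul_of_one_le_right (by positivity) hfact

theorem hasSum_besselJ_natCast (m : ℕ) (x : ℝ) :
    HasSum (fun k => (-1) ^ k * besselTerm m x k) (besselJ m x) := by
  rw [besselJ_natCast]
  exact (Summable.of_norm_bounded ((summable_pow_div_factorial _).mul_left _)
    (norm_besselTerm_le m x)).hasSum

theorem measurable_besselJ_natCast (m : ℕ) : Measurable fun x => besselJ m x :=
  measurable_of_tendsto_metrizable (f := fun n x => ∑ k ∈ range n, (-1) ^ k * besselTerm m x k)
    (fun n => by unfold besselTerm; fun_prop)
    (tendsto_pi_nhds.2 fun x => (hasSum_besselJ_natCast m x).tendsto_sum_nat)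

theorem antitone_besselTerm {m : ℕ} {x : ℝ} (hx : 0 ≤ x) (hxm : x ^ 2 ≤ 4 * m + 4) :
    Antitone (besselTerm m x) := by
  refine antitone_nat_of_succ_le fun k => ?_
  rw [besselTerm_succ]
  refine mul_le_of_le_one_right (besselTerm_nonneg m hx k) ((div_le_one (by positivity)).2 ?_)
  nlinarith [(k.cast_nonneg : (0 : ℝ) ≤ k), (m.cast_nonneg : (0 : ℝ) ≤ m)]

theorem besselJ_natCast_mem_Icc {m : ℕ} {x : ℝ} (hx : 0 ≤ x) (hxm : x ^ 2 ≤ 2 * m + 2) :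
    besselJ m x ∈ Icc (besselTerm m x 0 / 2) (besselTerm m x 0) := by
  have hsum := (hasSum_besselJ_natCast m x).tendsto_sum_nat
  have hanti := antitone_besselTerm hx (by linarith)
  have hsecond : besselTerm m x 1 ≤ besselTerm m x 0 / 2 := by
    rw [besselTerm_succ, div_eq_mul_one_div _ (2 : ℝ)]
    refine mul_le_mul_of_nonneg_left ((div_le_iff₀ (by positivity)).2 ?_) (besselTerm_nonneg m hx 0)
    push_cast
    linarith
  constructor
  · have := hanti.alternating_series_le_tendsto hsum 1
    simp only [mul_one, sum_range_succ, range_one, sum_singleton, pow_zero, one_mul, pow_one,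
      neg_mul, add_neg_le_iff_le_add] at this
    linarith
  · simpa using hanti.tendsto_le_alternating_series hsum 0

theorem integral_besselTerm_zero_sq_mul (m : ℕ) (R : ℝ) :
    ∫ r in (0 : ℝ)..R, besselTerm m r 0 ^ 2 * r = besselTerm m R 0 ^ 2 * R ^ 2 / (2 * m + 2) := by
  have hpoly (r : ℝ) : besselTerm m r 0 ^ 2 * r = ((2 ^ m * m !) ^ 2 : ℝ)⁻¹ * r ^ (2 * m + 1) := by
    rw [besselTerm_zero, div_pow r]
    field_simp
    ring
  simp_rw [hpoly, intervalIntegral.integral_const_mul, integral_pow, besselTerm_zero, div_pow R]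
  rw [zero_pow (by omega), sub_zero]
  field_simp
  push_cast
  ring

theorem besselJ_sq_mul_le {m : ℕ} {x : ℝ} (hx : 0 ≤ x) (hxm : x ^ 2 ≤ 2 * m + 2) :
    besselJ m x ^ 2 * x ≤ besselTerm m x 0 ^ 2 * x := by
  obtain ⟨hlow, hup⟩ := besselJ_natCast_mem_Icc hx hxm
  have hJ : 0 ≤ besselJ m x := le_trans (by linarith [besselTerm_nonneg m hx 0]) hlow
  gcongr

theorem intervalIntegrable_besselJ_sq_mul {m : ℕ} {R : ℝ} (hR : 0 ≤ R) (hRm : R ^ 2 ≤ 2 * m + 2) :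
    IntervalIntegrable (fun r => besselJ m r ^ 2 * r) volume 0 R := by
  refine IntervalIntegrable.mono_fun (f := fun r => besselTerm m r 0 ^ 2 * r)
    ((by unfold besselTerm; fun_prop : Continuous _).intervalIntegrable _ _)
    (((measurable_besselJ_natCast m).pow_const 2).mul measurable_id).aestronglyMeasurable ?_
  rw [uIoc_of_le hR]
  filter_upwards [ae_restrict_mem measurableSet_Ioc] with r ⟨hr0, hrR⟩
  have hr : r ^ 2 ≤ 2 * m + 2 := by nlinarith
  simp only [Real.norm_eq_abs]
  rw [abs_of_nonneg (by positivity), abs_of_nonneg (by positivity)]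
  exact besselJ_sq_mul_le hr0.le hr

theorem integral_besselJ_sq_mul_le {m : ℕ} {R : ℝ} (hR : 0 ≤ R) (hRm : R ^ 2 ≤ 2 * m + 2) :
    ∫ r in (0 : ℝ)..R, besselJ m r ^ 2 * r ≤ besselTerm m R 0 ^ 2 * R ^ 2 / (2 * m + 2) := by
  rw [← integral_besselTerm_zero_sq_mul]
  refine intervalIntegral.integral_mono_on hR (intervalIntegrable_besselJ_sq_mul hR hRm)
    ((by unfold besselTerm; fun_prop : Continuous _).intervalIntegrable _ _)
    fun r ⟨hr0, hrR⟩ => besselJ_sq_mul_le hr0 (by nlinarith)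

theorem integral_besselJ_sq_mul_pos {m : ℕ} {R : ℝ} (hR : 0 < R) (hRm : R ^ 2 ≤ 2 * m + 2) :
    0 < ∫ r in (0 : ℝ)..R, besselJ m r ^ 2 * r := by
  refine intervalIntegral.intervalIntegral_pos_of_pos_on
    (intervalIntegrable_besselJ_sq_mul hR.le hRm) (fun r ⟨hr0, hrR⟩ => ?_) hR
  have hJ := (besselJ_natCast_mem_Icc hr0.le (by nlinarith)).1
  have hJ_pos : 0 < besselJ m r := by linarith [besselTerm_zero_pos m hr0]
  positivity

theorem exists_M2 (r0 : ℝ) (hr0 : 0 < r0) :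
    ∃ M2 : ℕ, ∀ m : ℕ, M2 ≤ m →
      besselJ (m : ℝ) r0 / Real.sqrt (∫ r in (0 : ℝ)..r0, besselJ (m : ℝ) r ^ 2 * r) ≥
        1 / 2 * (Real.sqrt (2 * (m : ℝ) + 2) * r0⁻¹) := by
  refine ⟨⌈r0 ^ 2⌉₊, fun m hm => ?_⟩
  have hr0m : r0 ^ 2 ≤ 2 * m + 2 := by linarith [Nat.ceil_le.mp hm]
  set t := besselTerm m r0 0
  have ht : 0 < t := besselTerm_zero_pos m hr0
  have hJ : t / 2 ≤ besselJ m r0 := (besselJ_natCast_mem_Icc hr0.le hr0m).1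
  have hI : √(∫ r in (0 : ℝ)..r0, besselJ m r ^ 2 * r) ≤ t * r0 / √(2 * m + 2) := by
    refine sqrt_le_iff.2 ⟨by positivity, ?_⟩
    rw [div_pow, sq_sqrt (by positivity), mul_pow]
    exact integral_besselJ_sq_mul_le hr0.le hr0m
  calc 1 / 2 * (√(2 * m + 2) * r0⁻¹) = (t / 2) / (t * r0 / √(2 * m + 2)) := by
        field_simp
    _ ≤ besselJ m r0 / √(∫ r in (0 : ℝ)..r0, besselJ m r ^ 2 * r) :=
        div_le_div₀ (by linarith) hJ (sqrt_pos.2 (integral_besselJ_sq_mul_pos hr0 hr0m)) hI
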